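/- arXiv:2008.01409 — 7 statements merged into one kernel-verified Lean document; each statement's English description precedes it below -/
import Mathlib

section
/- Let (A, ⟪−,−⟫, μ) be a Hamiltonian algebra over B. Then the set of Casimir elements of A equals B: Cas(A) = ⊕_{s∈I} k·e_s. (The inclusion B ⊆ Cas(A) follows from B-linearity; conversely, any c with ⟪c,b⟫ = 0 for all b satisfies c e_s = λ_s e_s = e_s c for some λ_s ∈ k, for every s ∈ I.) -/
open TensorProduct

noncomputable section

/-- The flip `u ⊗ v ↦ v ⊗ u` on `A ⊗[k] A`. -/
def flipT (k A : Type*) [CommRing k] [Ring A] [Algebra k A] :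
    A ⊗[k] A →ₗ[k] A ⊗[k] A :=
  (TensorProduct.comm k A A).toLinearMap

/-- Outer left multiplication `b · (u ⊗ v) = (b * u) ⊗ v` on `A ⊗[k] A`. -/
def outL (k : Type*) {A : Type*} [CommRing k] [Ring A] [Algebra k A] (b : A) :
    A ⊗[k] A →ₗ[k] A ⊗[k] A :=
  TensorProduct.map (LinearMap.mulLeft k b) LinearMap.id

/-- Outer right multiplication `(u ⊗ v) · c = u ⊗ (v * c)` on `A ⊗[k] A`. -/
def outR (k : Type*) {A : Type*} [CommRing k] [Ring A] [Algebra k A] (c : A) :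
    A ⊗[k] A →ₗ[k] A ⊗[k] A :=
  TensorProduct.map LinearMap.id (LinearMap.mulRight k c)

/-- The cyclic permutation `τ : a₁ ⊗ a₂ ⊗ a₃ ↦ a₃ ⊗ a₁ ⊗ a₂`. -/
def tau3 (k A : Type*) [CommRing k] [Ring A] [Algebra k A] :
    A ⊗[k] (A ⊗[k] A) →ₗ[k] A ⊗[k] (A ⊗[k] A) :=
  (TensorProduct.comm k (A ⊗[k] A) A).toLinearMap ∘ₗ
    (TensorProduct.assoc k A A A).symm.toLinearMap

/-- `D` is a double bracket on `A`: a bilinear map `A × A → A ⊗ A` satisfying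
cyclic antisymmetry and the (outer-bimodule) derivation rule in its second slot. -/
structure IsDoubleBracket {k A : Type*} [CommRing k] [Ring A] [Algebra k A]
    (D : A →ₗ[k] A →ₗ[k] A ⊗[k] A) : Prop where
  cyclic_antisymm : ∀ a b : A, D a b = - flipT k A (D b a)
  derivation : ∀ a b c : A, D a (b * c) = outR k c (D a b) + outL k b (D a c)

/-- The map `d ↦ ⟪a, d′⟫ ⊗ d″` on `A ⊗ A`, valued in `A ⊗ (A ⊗ A)`. -/
def dblExt {k A : Type*} [CommRing k] [Ring A] [Algebra k A]
    (D : A →ₗ[k] A →ₗ[k] A ⊗[k] A) (a : A) :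
    A ⊗[k] A →ₗ[k] A ⊗[k] (A ⊗[k] A) :=
  (TensorProduct.assoc k A A A).toLinearMap ∘ₗ TensorProduct.map (D a) LinearMap.id

/-- The triple bracket associated with a double bracket:
`⟪a,b,c⟫ = ⟪a,⟪b,c⟫′⟫ ⊗ ⟪b,c⟫″ + τ(⟪b,⟪c,a⟫′⟫ ⊗ ⟪c,a⟫″) + τ²(⟪c,⟪a,b⟫′⟫ ⊗ ⟪a,b⟫″)`. -/
def tripleBracket {k A : Type*} [CommRing k] [Ring A] [Algebra k A]
    (D : A →ₗ[k] A →ₗ[k] A ⊗[k] A) (a b c : A) :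
    A ⊗[k] (A ⊗[k] A) :=
  dblExt D a (D b c) + tau3 k A (dblExt D b (D c a))
    + tau3 k A (tau3 k A (dblExt D c (D a b)))

/-- `μ` is a moment map for the double bracket `D` relative to the orthogonal
idempotents `e`: writing `μ_s = e_s μ e_s`, the off-diagonal components of `μ`
vanish and each `μ_s` satisfies the additive property
`⟪μ_s, a⟫ = a e_s ⊗ e_s − e_s ⊗ e_s a`. -/
def IsMomentMap {k A : Type*} [CommRing k] [Ring A] [Algebra k A]
    {I : Type*} (e : I → A) (D : A →ₗ[k] A →ₗ[k] A ⊗[k] A) (μ : A) : Prop :=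
  (∀ s t : I, s ≠ t → e s * μ * e t = 0) ∧
  ∀ (s : I) (a : A),
    D (e s * μ * e s) a = (a * e s) ⊗ₜ[k] (e s) - (e s) ⊗ₜ[k] (e s * a)

/-!
A Casimir element `c` satisfies `⟪μ_s, c⟫ = 0` by cyclic antisymmetry, so the moment map
relation reads `c e_s ⊗ e_s = e_s ⊗ e_s c`. Contracting the second tensor factor with a
functional that does not vanish on `e_s ≠ 0` shows `c e_s ∈ k e_s`, hence
`c = ∑ c e_s ∈ B`. Conversely, `B` consists of Casimir elements by `B`-linearity.
-/

theorem TensorProduct.exists_smul_eq_of_tmul_eq_tmul {K V W : Type*} [Field K]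
    [AddCommGroup V] [Module K V] [AddCommGroup W] [Module K W] {a v : V} {w w' : W}
    (hw : w ≠ 0) (h : a ⊗ₜ[K] w = v ⊗ₜ[K] w') : ∃ r : K, a = r • v := by
  obtain ⟨f, hf⟩ := Module.Projective.exists_dual_eq_one K hw
  have hcontract :=
    congrArg ((TensorProduct.rid K V).toLinearMap ∘ₗ TensorProduct.map LinearMap.id f) h
  simp only [LinearMap.comp_apply, map_tmul, LinearMap.id_apply, LinearEquiv.coe_coe,
    rid_tmul] at hcontract
  rw [hf, one_smul] at hcontract
  exact ⟨f w', hcontract⟩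

namespace IsDoubleBracket

variable {k A : Type*} [CommRing k] [Ring A] [Algebra k A] {D : A →ₗ[k] A →ₗ[k] A ⊗[k] A}

theorem apply_eq_zero_of_forall_apply_eq_zero (hD : IsDoubleBracket D) {c : A}
    (hc : ∀ b, D c b = 0) (a : A) : D a c = 0 := by
  rw [hD.cyclic_antisymm, hc, map_zero, neg_zero]

theorem span_range_le_ker {I : Type*} {e : I → A} (he : ∀ s a, D (e s) a = 0) :
    Submodule.span k (Set.range e) ≤ LinearMap.ker D :=
  Submodule.span_le.2 <| Set.range_subset_iff.2 fun s => LinearMap.ext (he s)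

end IsDoubleBracket

theorem mem_span_range_of_forall_mul_eq_smul {k A I : Type*} [CommRing k] [Ring A]
    [Algebra k A] [Fintype I] {e : I → A} (he_sum : ∑ s, e s = 1) {c : A}
    (hc : ∀ s, ∃ r : k, c * e s = r • e s) : c ∈ Submodule.span k (Set.range e) := by
  rw [← mul_one c, ← he_sum, Finset.mul_sum]
  refine Submodule.sum_mem _ fun s _ => ?_
  obtain ⟨r, hr⟩ := hc s
  rw [hr]
  exact Submodule.smul_mem _ _ (Submodule.subset_span ⟨s, rfl⟩)

theorem IsMomentMap.exists_mul_eq_smul_of_casimir {k A I : Type*} [Field k] [Ring A]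
    [Algebra k A] {e : I → A} {D : A →ₗ[k] A →ₗ[k] A ⊗[k] A} {μ : A}
    (hμ : IsMomentMap e D μ) (hD : IsDoubleBracket D) {c : A} (hc : ∀ b, D c b = 0)
    {s : I} (hs : e s ≠ 0) : ∃ r : k, c * e s = r • e s := by
  have hmoment := hμ.2 s c
  rw [hD.apply_eq_zero_of_forall_apply_eq_zero hc, eq_comm, sub_eq_zero] at hmoment
  exact TensorProduct.exists_smul_eq_of_tmul_eq_tmul hs hmoment

theorem casimirs_eq_base_general
    {k : Type*} [Field k]
    {A : Type*} [Ring A] [Algebra k A]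
    {I : Type*} [Fintype I]
    (e : I → A)
    (he_sum : ∑ s, e s = 1)
    (he_ne : ∀ s, e s ≠ 0)
    (D : A →ₗ[k] A →ₗ[k] A ⊗[k] A)
    (hD : IsDoubleBracket D)
    (hDB : ∀ (s : I) (a : A), D (e s) a = 0 ∧ D a (e s) = 0)
    (μ : A) (hμ : IsMomentMap e D μ) :
    ∀ c : A, (∀ b : A, D c b = 0) ↔ c ∈ Submodule.span k (Set.range e) := by
  intro c
  refine ⟨fun hc => ?_, fun hc b => ?_⟩
  · exact mem_span_range_of_forall_mul_eq_smul he_sum fun s =>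
      hμ.exists_mul_eq_smul_of_casimir hD hc (he_ne s)
  · have hker := IsDoubleBracket.span_range_le_ker (fun s a => (hDB s a).1) hc
    rw [LinearMap.mem_ker.1 hker, LinearMap.zero_apply]

/-- For a Hamiltonian algebra (A, ⟪−,−⟫, μ) over B, the Casimir
elements of A are exactly the elements of B = ⊕_{s∈I} k·e_s. -/
theorem casimirs_eq_base
    {k : Type*} [Field k] [CharZero k]
    {A : Type*} [Ring A] [Algebra k A]
    {I : Type*} [Fintype I]
    (e : I → A)
    (he_idem : ∀ s, e s * e s = e s)
    (he_orth : ∀ s t, s ≠ t → e s * e t = 0)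
    (he_sum : ∑ s, e s = 1)
    (he_ne : ∀ s, e s ≠ 0)
    (D : A →ₗ[k] A →ₗ[k] A ⊗[k] A)
    (hD : IsDoubleBracket D)
    (hDB : ∀ (s : I) (a : A), D (e s) a = 0 ∧ D a (e s) = 0)
    (hP : ∀ a b c : A, tripleBracket D a b c = 0)
    (μ : A) (hμ : IsMomentMap e D μ) :
    ∀ c : A, (∀ b : A, D c b = 0) ↔ c ∈ Submodule.span k (Set.range e) :=
  casimirs_eq_base_general e he_sum he_ne D hD hDB μ hμ
end
end

section
/- Let φ : A1 → A2 be an isomorphism of double Poisson algebras (a bijective morphism of double brackets between double Poisson algebras over B). If A1, A2 are Hamiltonian algebras with moment maps μ₁, μ₂, then μ₂ − φ(μ₁) ∈ B. In particular (taking φ = id), a moment map is unique up to the addition of an element of B. -/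
/-!
Both `μ₂` and `φ μ₁` are moment maps for the double bracket of `A2` (transport `μ₁` along the
surjection `φ`), so it suffices that two moment maps `μ, μ'` of one bracket differ by an
element of `B`. The off-diagonal components of `ν := μ - μ'` vanish. A diagonal component
`x := e_s ν e_s` satisfies `⟪x, -⟫ = 0`, since the moment relations of `μ_s` and `μ'_s` agree;
by cyclic antisymmetry also `⟪μ_s, x⟫ = 0`, and the moment relation then reads
`x ⊗ e_s = e_s ⊗ x`. Contracting the first factor with a functional that is `1` on `e_s` gives
`x ∈ k e_s`.
-/

open TensorProduct

noncomputable section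

theorem TensorProduct.mem_span_singleton_of_tmul_eq_tmul {k V : Type*} [Field k]
    [AddCommGroup V] [Module k V] {e x : V} (he : e ≠ 0) (h : x ⊗ₜ[k] e = e ⊗ₜ[k] x) :
    x ∈ k ∙ e := by
  obtain ⟨f, hf⟩ := Module.Projective.exists_dual_eq_one k he
  let contract : V ⊗[k] V →ₗ[k] V := (TensorProduct.lid k V).toLinearMap ∘ₗ map f LinearMap.id
  have hx : f x • e = x := by
    simpa [contract, hf] using congrArg contract h
  exact hx ▸ Submodule.smul_mem _ _ (Submodule.mem_span_singleton_self e)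

theorem Submodule.mem_of_forall_mul_mul_mem {k A I : Type*} [CommRing k] [Ring A]
    [Algebra k A] [Fintype I] {e : I → A} (he_sum : ∑ s, e s = 1) (S : Submodule k A) {x : A}
    (h : ∀ s t, e s * x * e t ∈ S) : x ∈ S := by
  have hx : x = ∑ s, ∑ t, e s * x * e t := by
    rw [← Finset.sum_mul_sum, ← Finset.sum_mul, he_sum, one_mul, mul_one]
  rw [hx]
  exact sum_mem fun s _ => sum_mem fun t _ => h s t

namespace IsMomentMap

section CommRing

variable {k A I : Type*} [CommRing k] [Ring A] [Algebra k A] {e : I → A}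
  {D : A →ₗ[k] A →ₗ[k] A ⊗[k] A} {μ μ' : A}

theorem map {A' : Type*} [Ring A'] [Algebra k A'] {e' : I → A'}
    {D' : A' →ₗ[k] A' →ₗ[k] A' ⊗[k] A'} (hμ : IsMomentMap e D μ) (φ : A →ₐ[k] A')
    (hφe : ∀ s, φ (e s) = e' s)
    (hφD : ∀ a b, map φ.toLinearMap φ.toLinearMap (D a b) = D' (φ a) (φ b))
    (hφ : Function.Surjective φ) : IsMomentMap e' D' (φ μ) := by
  refine ⟨fun s t hst => ?_, fun s a => ?_⟩
  · rw [← hφe, ← hφe, ← map_mul, ← map_mul, hμ.1 s t hst, map_zero]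
  · obtain ⟨b, rfl⟩ := hφ a
    rw [← hφe, ← map_mul, ← map_mul, ← hφD, hμ.2 s b]
    simp [hφe]

theorem mul_sub_mul_eq_zero (hμ : IsMomentMap e D μ) (hμ' : IsMomentMap e D μ') {s t : I}
    (hst : s ≠ t) : e s * (μ - μ') * e t = 0 := by
  rw [mul_sub, sub_mul, hμ.1 s t hst, hμ'.1 s t hst, sub_zero]

theorem apply_mul_sub_mul_eq_zero (hμ : IsMomentMap e D μ) (hμ' : IsMomentMap e D μ') (s : I)
    (a : A) : D (e s * (μ - μ') * e s) a = 0 := by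
  rw [mul_sub, sub_mul, map_sub, LinearMap.sub_apply, hμ.2 s a, hμ'.2 s a, sub_self]

end CommRing

section Field

variable {k A I : Type*} [Field k] [Ring A] [Algebra k A] {e : I → A}
  {D : A →ₗ[k] A →ₗ[k] A ⊗[k] A} {μ μ' : A}

theorem mul_sub_mul_mem_span_singleton (hD : IsDoubleBracket D)
    (he_idem : ∀ s, e s * e s = e s) (he_ne : ∀ s, e s ≠ 0)
    (hμ : IsMomentMap e D μ) (hμ' : IsMomentMap e D μ') (s : I) :
    e s * (μ - μ') * e s ∈ k ∙ e s := by
  set x := e s * (μ - μ') * e s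
  have hxe : x * e s = x := by rw [mul_assoc, he_idem]
  have hex : e s * x = x := by rw [← mul_assoc, ← mul_assoc, he_idem]
  have hμx : D (e s * μ * e s) x = 0 := by
    rw [hD.cyclic_antisymm, apply_mul_sub_mul_eq_zero hμ hμ', map_zero, neg_zero]
  have hcomm : x ⊗ₜ[k] e s = e s ⊗ₜ[k] x := by
    have := hμ.2 s x
    rwa [hμx, hxe, hex, eq_comm, sub_eq_zero] at this
  exact mem_span_singleton_of_tmul_eq_tmul (he_ne s) hcomm

theorem sub_mem_span_range [Fintype I] (hD : IsDoubleBracket D)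
    (he_idem : ∀ s, e s * e s = e s) (he_sum : ∑ s, e s = 1) (he_ne : ∀ s, e s ≠ 0)
    (hμ : IsMomentMap e D μ) (hμ' : IsMomentMap e D μ') :
    μ - μ' ∈ Submodule.span k (Set.range e) := by
  refine Submodule.mem_of_forall_mul_mul_mem he_sum _ fun s t => ?_
  rcases eq_or_ne s t with rfl | hst
  · exact Submodule.span_mono (Set.singleton_subset_iff.mpr (Set.mem_range_self s))
      (mul_sub_mul_mem_span_singleton hD he_idem he_ne hμ hμ' s)
  · rw [mul_sub_mul_eq_zero hμ hμ' hst]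
    exact zero_mem _

end Field

end IsMomentMap

theorem iso_momentMap_diff_mem_base_general
    {k : Type*} [Field k]
    {A1 : Type*} [Ring A1] [Algebra k A1]
    {A2 : Type*} [Ring A2] [Algebra k A2]
    {I : Type*} [Fintype I]
    (e1 : I → A1) (e2 : I → A2)
    (he2_idem : ∀ s, e2 s * e2 s = e2 s)
    (he2_sum : ∑ s, e2 s = 1)
    (he2_ne : ∀ s, e2 s ≠ 0)
    (D1 : A1 →ₗ[k] A1 →ₗ[k] A1 ⊗[k] A1)
    (D2 : A2 →ₗ[k] A2 →ₗ[k] A2 ⊗[k] A2)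
    (hD2 : IsDoubleBracket D2)
    (φ : A1 →ₐ[k] A2)
    (hφe : ∀ s, φ (e1 s) = e2 s)
    (hφD : ∀ a b : A1,
      TensorProduct.map φ.toLinearMap φ.toLinearMap (D1 a b) = D2 (φ a) (φ b))
    (hφbij : Function.Bijective φ)
    (μ₁ : A1) (hμ₁ : IsMomentMap e1 D1 μ₁)
    (μ₂ : A2) (hμ₂ : IsMomentMap e2 D2 μ₂) :
    μ₂ - φ μ₁ ∈ Submodule.span k (Set.range e2) :=
  hμ₂.sub_mem_span_range hD2 he2_idem he2_sum he2_ne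
    (hμ₁.map φ hφe hφD hφbij.surjective)

/-- If φ : A1 → A2 is an isomorphism of double Poisson algebras and
A1, A2 are Hamiltonian algebras with moment maps μ₁, μ₂, then μ₂ − φ(μ₁) ∈ B; in
particular a moment map is unique up to the addition of an element of B. -/
theorem iso_momentMap_diff_mem_base
    {k : Type*} [Field k] [CharZero k]
    {A1 : Type*} [Ring A1] [Algebra k A1]
    {A2 : Type*} [Ring A2] [Algebra k A2]
    {I : Type*} [Fintype I]
    (e1 : I → A1) (e2 : I → A2)
    (he1_idem : ∀ s, e1 s * e1 s = e1 s)
    (he1_orth : ∀ s t, s ≠ t → e1 s * e1 t = 0)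
    (he1_sum : ∑ s, e1 s = 1)
    (he1_ne : ∀ s, e1 s ≠ 0)
    (he2_idem : ∀ s, e2 s * e2 s = e2 s)
    (he2_orth : ∀ s t, s ≠ t → e2 s * e2 t = 0)
    (he2_sum : ∑ s, e2 s = 1)
    (he2_ne : ∀ s, e2 s ≠ 0)
    (D1 : A1 →ₗ[k] A1 →ₗ[k] A1 ⊗[k] A1)
    (D2 : A2 →ₗ[k] A2 →ₗ[k] A2 ⊗[k] A2)
    (hD1 : IsDoubleBracket D1) (hD2 : IsDoubleBracket D2)
    (hD1B : ∀ (s : I) (a : A1), D1 (e1 s) a = 0 ∧ D1 a (e1 s) = 0)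
    (hD2B : ∀ (s : I) (a : A2), D2 (e2 s) a = 0 ∧ D2 a (e2 s) = 0)
    (φ : A1 →ₐ[k] A2)
    (hφe : ∀ s, φ (e1 s) = e2 s)
    (hφD : ∀ a b : A1,
      TensorProduct.map φ.toLinearMap φ.toLinearMap (D1 a b) = D2 (φ a) (φ b))
    (hφbij : Function.Bijective φ)
    (hP1 : ∀ a b c : A1, tripleBracket D1 a b c = 0)
    (hP2 : ∀ a b c : A2, tripleBracket D2 a b c = 0)
    (μ₁ : A1) (hμ₁ : IsMomentMap e1 D1 μ₁)
    (μ₂ : A2) (hμ₂ : IsMomentMap e2 D2 μ₂) :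
    μ₂ - φ μ₁ ∈ Submodule.span k (Set.range e2) :=
  iso_momentMap_diff_mem_base_general e1 e2 he2_idem he2_sum he2_ne D1 D2 hD2 φ hφe hφD hφbij μ₁ hμ₁
    μ₂ hμ₂
end
end

section
/- Let ψ : A1 → A2 be a morphism of double brackets which is injective as an algebra homomorphism, where both brackets are double quasi-Poisson brackets, and suppose A2 is a quasi-Hamiltonian algebra with multiplicative moment map Φ′ such that Φ′ = ψ(Φ) and (Φ′)⁻¹ = ψ(Ξ) for some Φ, Ξ ∈ A1. Then Φ is invertible in A1 with inverse Ξ and is a multiplicative moment map for A1, so ψ is a morphism of quasi-Hamiltonian algebras, and this quasi-Hamiltonian structure on A1 is unique. -/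
open TensorProduct

noncomputable section

/-- The right-hand side of the double quasi-Poisson condition: a double bracket is
quasi-Poisson when its triple bracket equals this expression. -/
def quasiTerm {k A : Type*} [Field k] [Ring A] [Algebra k A]
    {I : Type*} [Fintype I] (e : I → A) (a b c : A) : A ⊗[k] (A ⊗[k] A) :=
  (1/4 : k) • ∑ s : I,
    ((c * e s * a) ⊗ₜ[k] ((e s * b) ⊗ₜ[k] (e s))
      - (c * e s * a) ⊗ₜ[k] ((e s) ⊗ₜ[k] (b * e s))
      - (c * e s) ⊗ₜ[k] ((a * e s * b) ⊗ₜ[k] (e s))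
      + (c * e s) ⊗ₜ[k] ((a * e s) ⊗ₜ[k] (b * e s))
      - (e s * a) ⊗ₜ[k] ((e s * b) ⊗ₜ[k] (e s * c))
      + (e s * a) ⊗ₜ[k] ((e s) ⊗ₜ[k] (b * e s * c))
      + (e s) ⊗ₜ[k] ((a * e s * b) ⊗ₜ[k] (e s * c))
      - (e s) ⊗ₜ[k] ((a * e s) ⊗ₜ[k] (b * e s * c)))

/-- `Φ` is a multiplicative moment map for the double bracket `D` relative to the
orthogonal idempotents `e`: `Φ` is invertible, its off-diagonal components vanish,
and each `Φ_s = e_s Φ e_s` satisfies the multiplicative property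
`⟪Φ_s, a⟫ = (1/2)(a e_s ⊗ Φ_s − e_s ⊗ Φ_s a + a Φ_s ⊗ e_s − Φ_s ⊗ e_s a)`. -/
def IsMultMomentMap {k A : Type*} [Field k] [Ring A] [Algebra k A]
    {I : Type*} (e : I → A) (D : A →ₗ[k] A →ₗ[k] A ⊗[k] A) (Φ : A) : Prop :=
  IsUnit Φ ∧
  (∀ s t : I, s ≠ t → e s * Φ * e t = 0) ∧
  ∀ (s : I) (a : A),
    D (e s * Φ * e s) a = (1/2 : k) •
      ((a * e s) ⊗ₜ[k] (e s * Φ * e s)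
        - (e s) ⊗ₜ[k] (e s * Φ * e s * a)
        + (a * (e s * Φ * e s)) ⊗ₜ[k] (e s)
        - (e s * Φ * e s) ⊗ₜ[k] (e s * a))

/-! Everything is reflected along `φ`. Over a field `φ ⊗ φ` is injective along with `φ`, so
the identities defining a multiplicative moment map, which hold for `φ Φ` in `A2` and
`A2 ⊗ A2`, pull back to `Φ`; inverting `Φ` and uniqueness need only injectivity of `φ`. -/

theorem IsMultMomentMap.of_map {k A1 A2 I : Type*} [Field k] [Ring A1] [Algebra k A1]
    [Ring A2] [Algebra k A2] {e1 : I → A1} {e2 : I → A2}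
    {D1 : A1 →ₗ[k] A1 →ₗ[k] A1 ⊗[k] A1} {D2 : A2 →ₗ[k] A2 →ₗ[k] A2 ⊗[k] A2}
    {φ : A1 →ₐ[k] A2} (hφinj : Function.Injective φ) (hφe : ∀ s, φ (e1 s) = e2 s)
    (hφD : ∀ a b : A1,
      TensorProduct.map φ.toLinearMap φ.toLinearMap (D1 a b) = D2 (φ a) (φ b))
    {Φ : A1} (hΦ : IsUnit Φ) (h : IsMultMomentMap e2 D2 (φ Φ)) :
    IsMultMomentMap e1 D1 Φ := by
  obtain ⟨-, h_offDiag, h_mult⟩ := h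
  refine ⟨hΦ, fun s t hst => hφinj ?_, fun s a =>
    TensorProduct.map_injective_of_flat_flat φ.toLinearMap φ.toLinearMap hφinj hφinj ?_⟩
  · simpa [hφe] using h_offDiag s t hst
  · rw [hφD]
    simpa [hφe, tmul_sub, sub_tmul, add_tmul] using h_mult s (φ a)

theorem injective_morphism_multMomentMap_general
    {k : Type*} [Field k]
    {A1 : Type*} [Ring A1] [Algebra k A1]
    {A2 : Type*} [Ring A2] [Algebra k A2]
    {I : Type*}
    (e1 : I → A1) (e2 : I → A2)
    (D1 : A1 →ₗ[k] A1 →ₗ[k] A1 ⊗[k] A1)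
    (D2 : A2 →ₗ[k] A2 →ₗ[k] A2 ⊗[k] A2)
    (φ : A1 →ₐ[k] A2)
    (hφe : ∀ s, φ (e1 s) = e2 s)
    (hφD : ∀ a b : A1,
      TensorProduct.map φ.toLinearMap φ.toLinearMap (D1 a b) = D2 (φ a) (φ b))
    (hφinj : Function.Injective φ)
    (Φ' : A2) (hΦ' : IsMultMomentMap e2 D2 Φ')
    (Φ Ξ : A1) (hΦφ : φ Φ = Φ')
    (hΞl : φ Ξ * Φ' = 1) (hΞr : Φ' * φ Ξ = 1) :
    Φ * Ξ = 1 ∧ Ξ * Φ = 1 ∧ IsMultMomentMap e1 D1 Φ ∧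
      ∀ Ψ : A1, φ Ψ = Φ' → Ψ = Φ := by
  subst hΦφ
  have hΦΞ : Φ * Ξ = 1 := hφinj (by rw [map_mul, map_one, hΞr])
  have hΞΦ : Ξ * Φ = 1 := hφinj (by rw [map_mul, map_one, hΞl])
  exact ⟨hΦΞ, hΞΦ, hΦ'.of_map hφinj hφe hφD ⟨⟨Φ, Ξ, hΦΞ, hΞΦ⟩, rfl⟩, fun _ hΨ => hφinj hΨ⟩

/-- If ψ : A1 → A2 is an injective morphism of double brackets between
double quasi-Poisson algebras, A2 is quasi-Hamiltonian with multiplicative moment map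
Φ′ = ψ(Φ), and (Φ′)⁻¹ = ψ(Ξ) for some Φ, Ξ ∈ A1, then Φ is invertible in A1 with
inverse Ξ and is a multiplicative moment map for A1, so ψ is a morphism of
quasi-Hamiltonian algebras; and this quasi-Hamiltonian structure on A1 is unique. -/
theorem injective_morphism_multMomentMap
    {k : Type*} [Field k] [CharZero k]
    {A1 : Type*} [Ring A1] [Algebra k A1]
    {A2 : Type*} [Ring A2] [Algebra k A2]
    {I : Type*} [Fintype I]
    (e1 : I → A1) (e2 : I → A2)
    (he1_idem : ∀ s, e1 s * e1 s = e1 s)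
    (he1_orth : ∀ s t, s ≠ t → e1 s * e1 t = 0)
    (he1_sum : ∑ s, e1 s = 1)
    (he1_ne : ∀ s, e1 s ≠ 0)
    (he2_idem : ∀ s, e2 s * e2 s = e2 s)
    (he2_orth : ∀ s t, s ≠ t → e2 s * e2 t = 0)
    (he2_sum : ∑ s, e2 s = 1)
    (he2_ne : ∀ s, e2 s ≠ 0)
    (D1 : A1 →ₗ[k] A1 →ₗ[k] A1 ⊗[k] A1)
    (D2 : A2 →ₗ[k] A2 →ₗ[k] A2 ⊗[k] A2)
    (hD1 : IsDoubleBracket D1) (hD2 : IsDoubleBracket D2)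
    (hD1B : ∀ (s : I) (a : A1), D1 (e1 s) a = 0 ∧ D1 a (e1 s) = 0)
    (hD2B : ∀ (s : I) (a : A2), D2 (e2 s) a = 0 ∧ D2 a (e2 s) = 0)
    (φ : A1 →ₐ[k] A2)
    (hφe : ∀ s, φ (e1 s) = e2 s)
    (hφD : ∀ a b : A1,
      TensorProduct.map φ.toLinearMap φ.toLinearMap (D1 a b) = D2 (φ a) (φ b))
    (hφinj : Function.Injective φ)
    (hQ1 : ∀ a b c : A1, tripleBracket D1 a b c = quasiTerm e1 a b c)
    (hQ2 : ∀ a b c : A2, tripleBracket D2 a b c = quasiTerm e2 a b c)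
    (Φ' : A2) (hΦ' : IsMultMomentMap e2 D2 Φ')
    (Φ Ξ : A1) (hΦφ : φ Φ = Φ')
    (hΞl : φ Ξ * Φ' = 1) (hΞr : Φ' * φ Ξ = 1) :
    Φ * Ξ = 1 ∧ Ξ * Φ = 1 ∧ IsMultMomentMap e1 D1 Φ ∧
      ∀ Ψ : A1, φ Ψ = Φ' → Ψ = Φ :=
  injective_morphism_multMomentMap_general e1 e2 D1 D2 φ hφe hφD hφinj Φ' hΦ' Φ Ξ hΦφ hΞl hΞr
end
end

section
/- Let ψ : A1 → A2 be an isomorphism of double quasi-Poisson algebras (a bijective morphism of double brackets between double quasi-Poisson algebras over B). If A1, A2 are quasi-Hamiltonian algebras with multiplicative moment maps Φ₁, Φ₂, then there exist ν_s ∈ k∖{0} for each s ∈ I such that Φ₂ = ν·ψ(Φ₁), where ν := Σ_{s∈I} ν_s e_s ∈ B is invertible; equivalently e_s Φ₂ e_s = ν_s ψ(e_s Φ₁ e_s) for all s ∈ I. In particular, a multiplicative moment map is unique up to multiplication by an invertible element of B. -/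
/-!
Write `P = e_s Φ₂ e_s` and `Q = e_s ψ(Φ₁) e_s`; transporting along the surjection `ψ` makes
`ψ(Φ₁)` a second multiplicative moment map on `A2`. Evaluating the moment-map identity at
`⟪P, Q⟫` and at `⟪Q, P⟫` and comparing them through cyclic antisymmetry, everything cancels
except `Q ⊗ P = P ⊗ Q`, which over a field forces `P` and `Q` to be proportional. Both
corners are nonzero since the moment maps are units and `e_s ≠ 0`, so the factor is nonzero.
-/

open TensorProduct

noncomputable section

lemma exists_eq_smul_of_tmul_comm {k V : Type*} [Field k] [AddCommGroup V] [Module k V]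
    {u v : V} (hu : u ≠ 0) (h : u ⊗ₜ[k] v = v ⊗ₜ[k] u) : ∃ c : k, v = c • u := by
  obtain ⟨f, hf⟩ : ∃ f : Module.Dual k V, f u ≠ 0 := by
    by_contra! hc
    exact hu ((Module.forall_dual_apply_eq_zero_iff k u).1 hc)
  -- contract the first tensor factor against `f`
  have hfuv : f u • v = f v • u := by
    simpa using congrArg (TensorProduct.lift ((LinearMap.lsmul k V).comp f)) h
  exact ⟨(f u)⁻¹ * f v, by rw [mul_smul, ← hfuv, inv_smul_smul₀ hf]⟩

section Corners

variable {A : Type*} [Ring A] {I : Type*} [Fintype I] {e : I → A} {Φ : A}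

lemma mul_idem_eq_corner (he_sum : ∑ s, e s = 1)
    (hoff : ∀ s t, s ≠ t → e s * Φ * e t = 0) (s : I) : Φ * e s = e s * Φ * e s := by
  calc Φ * e s = ∑ t, e t * Φ * e s := by rw [← Finset.sum_mul, ← Finset.sum_mul, he_sum, one_mul]
    _ = e s * Φ * e s :=
      Finset.sum_eq_single s (fun t _ hts => hoff t s hts) (fun h => absurd (Finset.mem_univ s) h)

lemma idem_mul_eq_corner (he_sum : ∑ s, e s = 1)
    (hoff : ∀ s t, s ≠ t → e s * Φ * e t = 0) (s : I) : e s * Φ = e s * Φ * e s := by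
  calc e s * Φ = ∑ t, e s * Φ * e t := by rw [← Finset.mul_sum, he_sum, mul_one]
    _ = e s * Φ * e s :=
      Finset.sum_eq_single s (fun t _ hts => hoff s t (Ne.symm hts))
        (fun h => absurd (Finset.mem_univ s) h)

lemma eq_sum_corners (he_sum : ∑ s, e s = 1)
    (hoff : ∀ s t, s ≠ t → e s * Φ * e t = 0) : Φ = ∑ s, e s * Φ * e s := by
  calc Φ = ∑ s, Φ * e s := by rw [← Finset.mul_sum, he_sum, mul_one]
    _ = ∑ s, e s * Φ * e s := Finset.sum_congr rfl fun s _ => mul_idem_eq_corner he_sum hoff s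

lemma corner_ne_zero (he_sum : ∑ s, e s = 1) (hoff : ∀ s t, s ≠ t → e s * Φ * e t = 0)
    (hΦ : IsUnit Φ) {s : I} (hes : e s ≠ 0) : e s * Φ * e s ≠ 0 := by
  rw [← mul_idem_eq_corner he_sum hoff s]
  exact fun h => hes (hΦ.mul_right_eq_zero.1 h)

end Corners

def momentTerm (k : Type*) {A : Type*} [Field k] [Ring A] [Algebra k A] (e P a : A) :
    A ⊗[k] A :=
  (1/2 : k) • ((a * e) ⊗ₜ[k] P - e ⊗ₜ[k] (P * a) + (a * P) ⊗ₜ[k] e - P ⊗ₜ[k] (e * a))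

lemma momentTerm_add_flipT {k A : Type*} [Field k] [NeZero (2 : k)] [Ring A] [Algebra k A]
    {e P Q : A} (hPe : P * e = P) (heP : e * P = P) (hQe : Q * e = Q) (heQ : e * Q = Q) :
    momentTerm k e P Q + flipT k A (momentTerm k e Q P) = Q ⊗ₜ[k] P - P ⊗ₜ[k] Q := by
  simp only [momentTerm, flipT, LinearEquiv.coe_coe, map_smul, map_sub, map_add,
    TensorProduct.comm_tmul, hPe, heP, hQe, heQ]
  calc _ = ((1/2 : k) + 1/2) • (Q ⊗ₜ[k] P - P ⊗ₜ[k] Q) := by module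
    _ = _ := by rw [add_halves, one_smul]

namespace IsMultMomentMap

variable {k : Type*} [Field k]

lemma moment_eq {A : Type*} [Ring A] [Algebra k A] {I : Type*} {e : I → A}
    {D : A →ₗ[k] A →ₗ[k] A ⊗[k] A} {Φ : A} (hΦ : IsMultMomentMap e D Φ) (s : I) (a : A) :
    D (e s * Φ * e s) a = momentTerm k (e s) (e s * Φ * e s) a :=
  hΦ.2.2 s a

lemma map_of_surjective {A₁ A₂ : Type*} [Ring A₁] [Algebra k A₁] [Ring A₂] [Algebra k A₂]
    {I : Type*} {e₁ : I → A₁} {e₂ : I → A₂}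
    {D₁ : A₁ →ₗ[k] A₁ →ₗ[k] A₁ ⊗[k] A₁} {D₂ : A₂ →ₗ[k] A₂ →ₗ[k] A₂ ⊗[k] A₂}
    {φ : A₁ →ₐ[k] A₂} (hφ : Function.Surjective φ) (hφe : ∀ s, φ (e₁ s) = e₂ s)
    (hφD : ∀ a b : A₁, TensorProduct.map φ.toLinearMap φ.toLinearMap (D₁ a b) = D₂ (φ a) (φ b))
    {Φ : A₁} (hΦ : IsMultMomentMap e₁ D₁ Φ) : IsMultMomentMap e₂ D₂ (φ Φ) := by
  obtain ⟨hunit, hoff, hmoment⟩ := hΦ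
  have hcorner : ∀ s t, e₂ s * φ Φ * e₂ t = φ (e₁ s * Φ * e₁ t) := by
    simp [hφe]
  refine ⟨hunit.map φ, fun s t hst => by rw [hcorner, hoff s t hst, map_zero], fun s a => ?_⟩
  obtain ⟨b, rfl⟩ := hφ a
  rw [hcorner, ← hφD, hmoment]
  simp [hφe]

variable [NeZero (2 : k)] {A : Type*} [Ring A] [Algebra k A] {I : Type*} {e : I → A}
  {D : A →ₗ[k] A →ₗ[k] A ⊗[k] A} {Φ Ψ : A}

lemma tmul_corner_comm (he_idem : ∀ s, e s * e s = e s)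
    (hD : ∀ a b, D a b = -flipT k A (D b a))
    (hΦ : IsMultMomentMap e D Φ) (hΨ : IsMultMomentMap e D Ψ) (s : I) :
    (e s * Ψ * e s) ⊗ₜ[k] (e s * Φ * e s) = (e s * Φ * e s) ⊗ₜ[k] (e s * Ψ * e s) := by
  have corner_mul (X : A) : e s * X * e s * e s = e s * X * e s := by
    rw [mul_assoc, he_idem]
  have mul_corner (X : A) : e s * (e s * X * e s) = e s * X * e s := by
    rw [← mul_assoc, ← mul_assoc, he_idem]
  have hflip : D (e s * Φ * e s) (e s * Ψ * e s)
      + flipT k A (D (e s * Ψ * e s) (e s * Φ * e s)) = 0 := by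
    rw [hD, neg_add_cancel]
  rw [hΦ.moment_eq, hΨ.moment_eq, momentTerm_add_flipT (corner_mul Φ) (mul_corner Φ)
    (corner_mul Ψ) (mul_corner Ψ)] at hflip
  exact sub_eq_zero.1 hflip

theorem exists_eq_smul_mul [Fintype I] (he_idem : ∀ s, e s * e s = e s)
    (he_sum : ∑ s, e s = 1) (he_ne : ∀ s, e s ≠ 0) (hD : ∀ a b, D a b = -flipT k A (D b a))
    (hΦ : IsMultMomentMap e D Φ) (hΨ : IsMultMomentMap e D Ψ) :
    ∃ ν : I → k, (∀ s, ν s ≠ 0) ∧ Φ = (∑ s, ν s • e s) * Ψ ∧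
      ∀ s, e s * Φ * e s = ν s • (e s * Ψ * e s) := by
  have hcorner : ∀ s, ∃ c : k, e s * Φ * e s = c • (e s * Ψ * e s) := fun s =>
    exists_eq_smul_of_tmul_comm (corner_ne_zero he_sum hΨ.2.1 hΨ.1 (he_ne s))
      (tmul_corner_comm he_idem hD hΦ hΨ s)
  choose ν hν using hcorner
  have hν_ne : ∀ s, ν s ≠ 0 := fun s h =>
    corner_ne_zero he_sum hΦ.2.1 hΦ.1 (he_ne s) (by rw [hν s, h, zero_smul])
  refine ⟨ν, hν_ne, ?_, hν⟩
  calc Φ = ∑ s, e s * Φ * e s := eq_sum_corners he_sum hΦ.2.1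
    _ = ∑ s, ν s • (e s * Ψ) := by
      simp_rw [hν, ← idem_mul_eq_corner he_sum hΨ.2.1]
    _ = (∑ s, ν s • e s) * Ψ := by simp_rw [Finset.sum_mul, smul_mul_assoc]

end IsMultMomentMap

theorem iso_multMomentMap_unique_up_to_unit_general
    {k : Type*} [Field k] [CharZero k]
    {A1 : Type*} [Ring A1] [Algebra k A1]
    {A2 : Type*} [Ring A2] [Algebra k A2]
    {I : Type*} [Fintype I]
    (e1 : I → A1) (e2 : I → A2)
    (he2_idem : ∀ s, e2 s * e2 s = e2 s)
    (he2_sum : ∑ s, e2 s = 1)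
    (he2_ne : ∀ s, e2 s ≠ 0)
    (D1 : A1 →ₗ[k] A1 →ₗ[k] A1 ⊗[k] A1)
    (D2 : A2 →ₗ[k] A2 →ₗ[k] A2 ⊗[k] A2)
    (hD2 : IsDoubleBracket D2)
    (φ : A1 →ₐ[k] A2)
    (hφe : ∀ s, φ (e1 s) = e2 s)
    (hφD : ∀ a b : A1,
      TensorProduct.map φ.toLinearMap φ.toLinearMap (D1 a b) = D2 (φ a) (φ b))
    (hφbij : Function.Bijective φ)
    (Φ₁ : A1) (hΦ₁ : IsMultMomentMap e1 D1 Φ₁)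
    (Φ₂ : A2) (hΦ₂ : IsMultMomentMap e2 D2 Φ₂) :
    ∃ ν : I → k, (∀ s, ν s ≠ 0) ∧
      Φ₂ = (∑ s, ν s • e2 s) * φ Φ₁ ∧
      ∀ s : I, e2 s * Φ₂ * e2 s = ν s • φ (e1 s * Φ₁ * e1 s) := by
  obtain ⟨ν, hν_ne, hΦ₂_eq, hν⟩ := hΦ₂.exists_eq_smul_mul he2_idem he2_sum he2_ne
    hD2.cyclic_antisymm (hΦ₁.map_of_surjective hφbij.2 hφe hφD)
  refine ⟨ν, hν_ne, hΦ₂_eq, fun s => ?_⟩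
  rw [hν s, map_mul, map_mul, hφe]

/-- If ψ : A1 → A2 is an isomorphism of double quasi-Poisson algebras
and A1, A2 are quasi-Hamiltonian with multiplicative moment maps Φ₁, Φ₂, then there are
nonzero scalars ν_s with Φ₂ = (Σ_s ν_s e_s)·ψ(Φ₁), i.e. e_s Φ₂ e_s = ν_s ψ(e_s Φ₁ e_s)
for each s. In particular a multiplicative moment map is unique up to multiplication by
an invertible element of B. -/
theorem iso_multMomentMap_unique_up_to_unit
    {k : Type*} [Field k] [CharZero k]
    {A1 : Type*} [Ring A1] [Algebra k A1]
    {A2 : Type*} [Ring A2] [Algebra k A2]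
    {I : Type*} [Fintype I]
    (e1 : I → A1) (e2 : I → A2)
    (he1_idem : ∀ s, e1 s * e1 s = e1 s)
    (he1_orth : ∀ s t, s ≠ t → e1 s * e1 t = 0)
    (he1_sum : ∑ s, e1 s = 1)
    (he1_ne : ∀ s, e1 s ≠ 0)
    (he2_idem : ∀ s, e2 s * e2 s = e2 s)
    (he2_orth : ∀ s t, s ≠ t → e2 s * e2 t = 0)
    (he2_sum : ∑ s, e2 s = 1)
    (he2_ne : ∀ s, e2 s ≠ 0)
    (D1 : A1 →ₗ[k] A1 →ₗ[k] A1 ⊗[k] A1)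
    (D2 : A2 →ₗ[k] A2 →ₗ[k] A2 ⊗[k] A2)
    (hD1 : IsDoubleBracket D1) (hD2 : IsDoubleBracket D2)
    (hD1B : ∀ (s : I) (a : A1), D1 (e1 s) a = 0 ∧ D1 a (e1 s) = 0)
    (hD2B : ∀ (s : I) (a : A2), D2 (e2 s) a = 0 ∧ D2 a (e2 s) = 0)
    (φ : A1 →ₐ[k] A2)
    (hφe : ∀ s, φ (e1 s) = e2 s)
    (hφD : ∀ a b : A1,
      TensorProduct.map φ.toLinearMap φ.toLinearMap (D1 a b) = D2 (φ a) (φ b))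
    (hφbij : Function.Bijective φ)
    (hQ1 : ∀ a b c : A1, tripleBracket D1 a b c = quasiTerm e1 a b c)
    (hQ2 : ∀ a b c : A2, tripleBracket D2 a b c = quasiTerm e2 a b c)
    (Φ₁ : A1) (hΦ₁ : IsMultMomentMap e1 D1 Φ₁)
    (Φ₂ : A2) (hΦ₂ : IsMultMomentMap e2 D2 Φ₂) :
    ∃ ν : I → k, (∀ s, ν s ≠ 0) ∧
      Φ₂ = (∑ s, ν s • e2 s) * φ Φ₁ ∧
      ∀ s : I, e2 s * Φ₂ * e2 s = ν s • φ (e1 s * Φ₁ * e1 s) :=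
  iso_multMomentMap_unique_up_to_unit_general e1 e2 he2_idem he2_sum he2_ne D1 D2 hD2 φ hφe hφD
    hφbij Φ₁ hΦ₁ Φ₂ hΦ₂
end
end

section
/- Let ⟪−,−⟫ be a double bracket on A such that for all a,b,c ∈ A the image of the associated triple bracket ⟪a,b,c⟫ under the multiplication map A⊗A⊗A → A, u⊗v⊗w ↦ uvw, is zero (this holds in particular for any double Poisson or double quasi-Poisson bracket). Then, with {a,b} := m(⟪a,b⟫), one has {a,{b,c}} − {b,{a,c}} − {{a,b},c} = 0 for all a,b,c ∈ A, and consequently the cyclic Jacobi identity holds modulo commutators: {a,{b,c}} + {b,{c,a}} + {c,{a,b}} ∈ [A,A]. Hence the induced antisymmetric bracket on H₀(A) := A/[A,A] is a Lie bracket. -/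
open TensorProduct

noncomputable section

/-- The multiplication map `A ⊗ A → A`, `u ⊗ v ↦ u v`. -/
def mulT2 (k A : Type*) [CommRing k] [Ring A] [Algebra k A] :
    A ⊗[k] A →ₗ[k] A :=
  LinearMap.mul' k A

/-- The multiplication map `A ⊗ A ⊗ A → A`, `u ⊗ v ⊗ w ↦ u v w`. -/
def mulT3 (k A : Type*) [CommRing k] [Ring A] [Algebra k A] :
    A ⊗[k] (A ⊗[k] A) →ₗ[k] A :=
  LinearMap.mul' k A ∘ₗ TensorProduct.map LinearMap.id (LinearMap.mul' k A)

/-- `[A,A]`, the k-linear span of commutators in `A`. -/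
def commutatorSpan (k A : Type*) [CommRing k] [Ring A] [Algebra k A] :
    Submodule k A :=
  Submodule.span k {x : A | ∃ a b : A, x = a * b - b * a}

/-- The two-sided ideal of `A` generated by `x` (as a k-submodule: the span of
all elements `p * x * q`). -/
def twoSidedSpan (k : Type*) {A : Type*} [CommRing k] [Ring A] [Algebra k A]
    (x : A) : Submodule k A :=
  Submodule.span k {y : A | ∃ p q : A, y = p * x * q}

/-!
Write `{a, b} = m⟪a, b⟫`. Applying `m` to `⟪a, w′ w″⟫` via the derivation rule gives
`{a, m w} = m₃(⟪a, w′⟫ ⊗ w″) + m₃ τ(⟪a, w″⟫ ⊗ w′)`, and cyclic antisymmetry gives the analogous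
expansion of `{m w, c}` through `τ²`. Expanding `{a,{b,c}}`, `{b,{a,c}}` and `{{a,b},c}` this way,
their alternating sum is exactly `m₃⟪a,b,c⟫ − m₃⟪b,a,c⟫` once cyclic antisymmetry is used to
rewrite the double brackets inside the two triple brackets; so it vanishes. Since `m(u ⊗ v)` and
`m(v ⊗ u)` differ by a commutator, `{a,b} + {b,a} ∈ [A,A]`, and `{b, -}` preserves `[A,A]` because
it is a derivation; these two facts turn the Leibniz identity into the cyclic Jacobi identity
modulo commutators.
-/

section TensorMaps

variable {k : Type*} [CommRing k] {A : Type*} [Ring A] [Algebra k A]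

@[simp] theorem mulT2_tmul (p q : A) : mulT2 k A (p ⊗ₜ[k] q) = p * q := rfl

@[simp] theorem mulT3_tmul (p q r : A) : mulT3 k A (p ⊗ₜ[k] (q ⊗ₜ[k] r)) = p * (q * r) := rfl

@[simp] theorem flipT_tmul (p q : A) : flipT k A (p ⊗ₜ[k] q) = q ⊗ₜ[k] p := rfl

@[simp] theorem tau3_tmul (p q r : A) :
    tau3 k A (p ⊗ₜ[k] (q ⊗ₜ[k] r)) = r ⊗ₜ[k] (p ⊗ₜ[k] q) := rfl

@[simp] theorem outR_tmul (c p q : A) : outR k c (p ⊗ₜ[k] q) = p ⊗ₜ[k] (q * c) := rfl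

@[simp] theorem outL_tmul (b p q : A) : outL k b (p ⊗ₜ[k] q) = (b * p) ⊗ₜ[k] q := rfl

theorem dblExt_tmul (D : A →ₗ[k] A →ₗ[k] A ⊗[k] A) (a u v : A) :
    dblExt D a (u ⊗ₜ[k] v) = TensorProduct.assoc k A A A (D a u ⊗ₜ[k] v) := rfl

theorem mulT2_outR (c : A) (t : A ⊗[k] A) : mulT2 k A (outR k c t) = mulT2 k A t * c := by
  induction t using TensorProduct.induction_on with
  | zero => simp
  | tmul p q => simp [mul_assoc]
  | add x y hx hy => simp [hx, hy, add_mul]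

theorem mulT2_outL (b : A) (t : A ⊗[k] A) : mulT2 k A (outL k b t) = b * mulT2 k A t := by
  induction t using TensorProduct.induction_on with
  | zero => simp
  | tmul p q => simp [mul_assoc]
  | add x y hx hy => simp [hx, hy, mul_add]

theorem mulT2_flipT_outL (e : A) (w : A ⊗[k] A) :
    mulT2 k A (flipT k A (outL k e w)) = mulT2 k A (flipT k A (outR k e w)) := by
  induction w using TensorProduct.induction_on with
  | zero => simp
  | tmul p q => simp [mul_assoc]
  | add x y hx hy => simp [hx, hy]

theorem mulT3_assoc_tmul (w : A ⊗[k] A) (v : A) :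
    mulT3 k A (TensorProduct.assoc k A A A (w ⊗ₜ[k] v)) = mulT2 k A w * v := by
  induction w using TensorProduct.induction_on with
  | zero => simp
  | tmul p q => simp [mul_assoc]
  | add x y hx hy => simp [add_tmul, hx, hy, add_mul]

theorem mulT3_tau3_assoc_tmul (w : A ⊗[k] A) (t : A) :
    mulT3 k A (tau3 k A (TensorProduct.assoc k A A A (w ⊗ₜ[k] t))) = t * mulT2 k A w := by
  induction w using TensorProduct.induction_on with
  | zero => simp
  | tmul p q => simp
  | add x y hx hy => simp [add_tmul, hx, hy, mul_add]

theorem mulT3_tau3_tau3_assoc_tmul (w : A ⊗[k] A) (f : A) :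
    mulT3 k A (tau3 k A (tau3 k A (TensorProduct.assoc k A A A (w ⊗ₜ[k] f))))
      = mulT2 k A (flipT k A (outR k f w)) := by
  induction w using TensorProduct.induction_on with
  | zero => simp
  | tmul p q => simp [mul_assoc]
  | add x y hx hy => simp [add_tmul, hx, hy]

theorem mulT2_sub_mulT2_flipT_mem_commutatorSpan (w : A ⊗[k] A) :
    mulT2 k A w - mulT2 k A (flipT k A w) ∈ commutatorSpan k A := by
  induction w using TensorProduct.induction_on with
  | zero => simp
  | tmul p q => exact Submodule.subset_span ⟨p, q, by simp⟩
  | add x y hx hy => simpa [add_sub_add_comm] using add_mem hx hy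

end TensorMaps

namespace IsDoubleBracket

variable {k : Type*} [CommRing k] {A : Type*} [Ring A] [Algebra k A]
  {D : A →ₗ[k] A →ₗ[k] A ⊗[k] A}

theorem mulT2_apply_mul (hD : IsDoubleBracket D) (b p q : A) :
    mulT2 k A (D b (p * q)) = mulT2 k A (D b p) * q + p * mulT2 k A (D b q) := by
  rw [hD.derivation, map_add, mulT2_outR, mulT2_outL]

theorem mulT2_apply_mulT2 (hD : IsDoubleBracket D) (a : A) (w : A ⊗[k] A) :
    mulT2 k A (D a (mulT2 k A w))
      = mulT3 k A (dblExt D a w) + mulT3 k A (tau3 k A (dblExt D a (flipT k A w))) := by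
  induction w using TensorProduct.induction_on with
  | zero => simp
  | tmul u v =>
    rw [mulT2_tmul, hD.mulT2_apply_mul, flipT_tmul, dblExt_tmul, dblExt_tmul,
      mulT3_assoc_tmul, mulT3_tau3_assoc_tmul]
  | add x y hx hy =>
    simp only [map_add, hx, hy]
    abel

theorem mulT2_mulT2_apply (hD : IsDoubleBracket D) (c : A) (w : A ⊗[k] A) :
    mulT2 k A (D (mulT2 k A w) c)
      = -(mulT3 k A (tau3 k A (tau3 k A (dblExt D c w)))
          + mulT3 k A (tau3 k A (tau3 k A (dblExt D c (flipT k A w))))) := by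
  induction w using TensorProduct.induction_on with
  | zero => simp
  | tmul e f =>
    rw [mulT2_tmul, hD.cyclic_antisymm (e * f) c, hD.derivation c e f]
    simp only [map_neg, map_add]
    rw [mulT2_flipT_outL, flipT_tmul, dblExt_tmul, dblExt_tmul, mulT3_tau3_tau3_assoc_tmul,
      mulT3_tau3_tau3_assoc_tmul]
  | add x y hx hy =>
    simp only [map_add, LinearMap.add_apply, hx, hy]
    abel

theorem leibniz_eq_mulT3_tripleBracket_sub (hD : IsDoubleBracket D) (a b c : A) :
    mulT2 k A (D a (mulT2 k A (D b c)))
        - mulT2 k A (D b (mulT2 k A (D a c)))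
        - mulT2 k A (D (mulT2 k A (D a b)) c)
      = mulT3 k A (tripleBracket D a b c) - mulT3 k A (tripleBracket D b a c) := by
  simp only [tripleBracket, hD.cyclic_antisymm c a, hD.cyclic_antisymm c b,
    hD.cyclic_antisymm b a, map_neg, map_add]
  rw [hD.mulT2_apply_mulT2 a (D b c), hD.mulT2_apply_mulT2 b (D a c),
    hD.mulT2_mulT2_apply c (D a b)]
  abel

theorem mulT2_add_mulT2_swap_mem (hD : IsDoubleBracket D) (a b : A) :
    mulT2 k A (D a b) + mulT2 k A (D b a) ∈ commutatorSpan k A := by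
  rw [hD.cyclic_antisymm b a, map_neg, ← sub_eq_add_neg]
  exact mulT2_sub_mulT2_flipT_mem_commutatorSpan (D a b)

theorem mulT2_apply_mem_commutatorSpan (hD : IsDoubleBracket D) (b : A) {x : A}
    (hx : x ∈ commutatorSpan k A) : mulT2 k A (D b x) ∈ commutatorSpan k A := by
  induction hx using Submodule.span_induction with
  | mem x h =>
    obtain ⟨p, q, rfl⟩ := h
    have hpq : mulT2 k A (D b (p * q - q * p))
        = (mulT2 k A (D b p) * q - q * mulT2 k A (D b p))
          + (p * mulT2 k A (D b q) - mulT2 k A (D b q) * p) := by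
      rw [map_sub, map_sub, hD.mulT2_apply_mul, hD.mulT2_apply_mul]
      abel
    rw [hpq]
    exact add_mem (Submodule.subset_span ⟨_, q, rfl⟩) (Submodule.subset_span ⟨p, _, rfl⟩)
  | zero => simp
  | add x y _ _ hx hy => rw [map_add, map_add]; exact add_mem hx hy
  | smul r x _ hx => rw [map_smul, map_smul]; exact Submodule.smul_mem _ r hx

theorem cyclic_jacobi_mem_of_leibniz (hD : IsDoubleBracket D) (a b c : A)
    (hL : mulT2 k A (D a (mulT2 k A (D b c)))
        - mulT2 k A (D b (mulT2 k A (D a c)))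
        - mulT2 k A (D (mulT2 k A (D a b)) c) = 0) :
    mulT2 k A (D a (mulT2 k A (D b c)))
        + mulT2 k A (D b (mulT2 k A (D c a)))
        + mulT2 k A (D c (mulT2 k A (D a b))) ∈ commutatorSpan k A := by
  rw [sub_sub, sub_eq_zero] at hL
  have hsum : mulT2 k A (D a (mulT2 k A (D b c))) + mulT2 k A (D b (mulT2 k A (D c a)))
        + mulT2 k A (D c (mulT2 k A (D a b)))
      = mulT2 k A (D b (mulT2 k A (D a c) + mulT2 k A (D c a)))
        + (mulT2 k A (D (mulT2 k A (D a b)) c) + mulT2 k A (D c (mulT2 k A (D a b)))) := by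
    rw [hL, map_add, map_add]
    abel
  rw [hsum]
  exact add_mem (hD.mulT2_apply_mem_commutatorSpan b (hD.mulT2_add_mulT2_swap_mem a c))
    (hD.mulT2_add_mulT2_swap_mem _ c)

end IsDoubleBracket

theorem mul_tripleBracket_zero_gives_Lie_general
    {k : Type*} [Field k]
    {A : Type*} [Ring A] [Algebra k A]
    (D : A →ₗ[k] A →ₗ[k] A ⊗[k] A)
    (hD : IsDoubleBracket D)
    (hm3 : ∀ a b c : A, mulT3 k A (tripleBracket D a b c) = 0) :
    (∀ a b c : A,
      mulT2 k A (D a (mulT2 k A (D b c)))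
        - mulT2 k A (D b (mulT2 k A (D a c)))
        - mulT2 k A (D (mulT2 k A (D a b)) c) = 0) ∧
    (∀ a b : A, mulT2 k A (D a b) + mulT2 k A (D b a) ∈ commutatorSpan k A) ∧
    (∀ a b c : A,
      mulT2 k A (D a (mulT2 k A (D b c)))
        + mulT2 k A (D b (mulT2 k A (D c a)))
        + mulT2 k A (D c (mulT2 k A (D a b))) ∈ commutatorSpan k A) := by
  have leibniz : ∀ a b c : A,
      mulT2 k A (D a (mulT2 k A (D b c)))
        - mulT2 k A (D b (mulT2 k A (D a c)))
        - mulT2 k A (D (mulT2 k A (D a b)) c) = 0 := fun a b c => by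
    rw [hD.leibniz_eq_mulT3_tripleBracket_sub, hm3, hm3, sub_zero]
  exact ⟨leibniz, hD.mulT2_add_mulT2_swap_mem,
    fun a b c => hD.cyclic_jacobi_mem_of_leibniz a b c (leibniz a b c)⟩

/-- Let ⟪−,−⟫ be a double bracket on A whose associated triple bracket
multiplies to zero (as holds for double Poisson and double quasi-Poisson brackets).
With {a,b} := m(⟪a,b⟫), one has {a,{b,c}} − {b,{a,c}} − {{a,b},c} = 0; consequently the
bracket is antisymmetric modulo commutators and satisfies the cyclic Jacobi identity
modulo commutators, so the induced antisymmetric bracket on H₀(A) = A/[A,A] is a Lie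
bracket. -/
theorem mul_tripleBracket_zero_gives_Lie
    {k : Type*} [Field k] [CharZero k]
    {A : Type*} [Ring A] [Algebra k A]
    (D : A →ₗ[k] A →ₗ[k] A ⊗[k] A)
    (hD : IsDoubleBracket D)
    (hm3 : ∀ a b c : A, mulT3 k A (tripleBracket D a b c) = 0) :
    (∀ a b c : A,
      mulT2 k A (D a (mulT2 k A (D b c)))
        - mulT2 k A (D b (mulT2 k A (D a c)))
        - mulT2 k A (D (mulT2 k A (D a b)) c) = 0) ∧
    (∀ a b : A, mulT2 k A (D a b) + mulT2 k A (D b a) ∈ commutatorSpan k A) ∧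
    (∀ a b c : A,
      mulT2 k A (D a (mulT2 k A (D b c)))
        + mulT2 k A (D b (mulT2 k A (D c a)))
        + mulT2 k A (D c (mulT2 k A (D a b))) ∈ commutatorSpan k A) :=
  mul_tripleBracket_zero_gives_Lie_general D hD hm3
end
end

section
/- Let m ≥ 1, n ≥ 1, let λ₀, …, λ_{m−1} ∈ ℂ and set ℓ := λ₀ + ⋯ + λ_{m−1}. Let q₁, …, q_n ∈ ℂ be nonzero with q_i^m ≠ q_j^m for all i ≠ j, and let p₁, …, p_n ∈ ℂ. For each s ∈ {0,…,m−1} define the n×n complex matrices X_s := diag(q₁,…,q_n) and X*_s by (X*_s)_{jj} := p_j + (λ₁ + ⋯ + λ_s)/q_j (the sum λ₁+⋯+λ_s being empty, hence 0, when s = 0) and (X*_s)_{ij} := −ℓ·q_i^{m−s−1} q_j^{s} / (q_i^m − q_j^m) for i ≠ j; let V be the 1×n matrix (1,…,1) and V* the n×1 matrix −ℓ·(1,…,1)ᵀ. Then, reading the index s−1 modulo m, for every s ∈ {0,…,m−1}: X_s X*_s − X*_{s−1} X_{s−1} − δ_{s,0} V* V = λ_s · Id_n. -/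
open scoped BigOperators

noncomputable section

/-- The matrix `X*_s` of the local slice: diagonal entries
`p_j + (λ₁ + ⋯ + λ_s)/q_j`, off-diagonal entries
`−ℓ · q_i^{m−s−1} q_j^s / (q_i^m − q_j^m)` where `ℓ = λ₀ + ⋯ + λ_{m−1}`. -/
def XstarCM (m : ℕ) (lam : ℕ → ℂ) {n : ℕ} (q p : Fin n → ℂ) (s : ℕ) :
    Matrix (Fin n) (Fin n) ℂ :=
  Matrix.of fun i j =>
    if i = j then
      p j + (∑ r ∈ Finset.Icc 1 s, lam r) / q j
    else
      -(∑ r ∈ Finset.range m, lam r) * q i ^ (m - s - 1) * q j ^ s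
        / (q i ^ m - q j ^ m)

/-- The row vector `V = (1,…,1)`. -/
def VrowCM (n : ℕ) : Matrix (Fin 1) (Fin n) ℂ := Matrix.of fun _ _ => 1

/-- The column vector `V* = −ℓ·(1,…,1)ᵀ`. -/
def VstarCM (n : ℕ) (ℓ : ℂ) : Matrix (Fin n) (Fin 1) ℂ := Matrix.of fun _ _ => -ℓ

open Matrix Finset

/-! Writing `Λ_s = λ₁ + ⋯ + λ_s`, the diagonal entries of `X_s X*_s − X*_{s−1} X_{s−1}`
are `Λ_s − Λ_{s−1}`, which is `λ_s` for `s ≥ 1` and `−(ℓ − λ₀)` for `s = 0`, where `V* V = −ℓ`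
restores `λ₀`. Off the diagonal, the powers of `q` in `X*_s` are chosen so that
`q_i (X*_s)_{ij} = (X*_{s−1})_{ij} q_j` for `s ≥ 1`, while for `s = 0` the difference is
`−ℓ (q_i^m − q_j^m)/(q_i^m − q_j^m) = −ℓ`, again cancelled by `V* V`. -/

theorem diagonal_mul_sub_mul_diagonal_apply {ι R : Type*} [Fintype ι] [DecidableEq ι]
    [NonUnitalNonAssocRing R] (d : ι → R) (A B : Matrix ι ι R) (i j : ι) :
    (diagonal d * A - B * diagonal d) i j = d i * A i j - B i j * d j := by
  rw [Matrix.sub_apply, diagonal_mul, mul_diagonal]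

theorem VstarCM_mul_VrowCM_apply (n : ℕ) (ℓ : ℂ) (i j : Fin n) :
    (VstarCM n ℓ * VrowCM n) i j = -ℓ := by
  simp [VstarCM, VrowCM, mul_apply]

section XstarCM

variable {m : ℕ} {lam : ℕ → ℂ} {n : ℕ} {q p : Fin n → ℂ}

theorem XstarCM_diag_commutator {s s' : ℕ} {i : Fin n} (hqi : q i ≠ 0) :
    q i * XstarCM m lam q p s i i - XstarCM m lam q p s' i i * q i
      = ∑ r ∈ Icc 1 s, lam r - ∑ r ∈ Icc 1 s', lam r := by
  simp only [XstarCM, of_apply, if_true]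
  field_simp
  ring

theorem XstarCM_succ_commutator_of_ne {t : ℕ} (ht : t + 1 < m) {i j : Fin n} (hij : i ≠ j) :
    q i * XstarCM m lam q p (t + 1) i j = XstarCM m lam q p t i j * q j := by
  obtain ⟨v, rfl⟩ : ∃ v, m = t + v + 2 := ⟨m - t - 2, by omega⟩
  simp only [XstarCM, of_apply, if_neg hij,
    show t + v + 2 - (t + 1) - 1 = v by omega, show t + v + 2 - t - 1 = v + 1 by omega]
  ring

theorem XstarCM_zero_commutator_of_ne (hm : 1 ≤ m) {i j : Fin n} (hij : i ≠ j)
    (hqij : q i ^ m ≠ q j ^ m) :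
    q i * XstarCM m lam q p 0 i j - XstarCM m lam q p (m - 1) i j * q j
      = -∑ r ∈ range m, lam r := by
  have hD : q i ^ m - q j ^ m ≠ 0 := sub_ne_zero.2 hqij
  obtain ⟨u, rfl⟩ : ∃ u, m = u + 1 := ⟨m - 1, by omega⟩
  simp only [XstarCM, of_apply, if_neg hij, Nat.add_sub_cancel, Nat.sub_zero,
    show u + 1 - u - 1 = 0 by omega]
  field_simp
  ring

theorem XstarCM_momentMap_succ {t : ℕ} (ht : t + 1 < m) (hq0 : ∀ i, q i ≠ 0) :
    diagonal q * XstarCM m lam q p (t + 1) - XstarCM m lam q p t * diagonal q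
      = lam (t + 1) • (1 : Matrix (Fin n) (Fin n) ℂ) := by
  ext i j
  rw [diagonal_mul_sub_mul_diagonal_apply, Matrix.smul_apply, smul_eq_mul]
  rcases eq_or_ne i j with rfl | hij
  · rw [XstarCM_diag_commutator (hq0 i), sum_Icc_succ_top (by omega),
      one_apply_eq, mul_one, add_sub_cancel_left]
  · rw [XstarCM_succ_commutator_of_ne ht hij, sub_self, one_apply_ne hij, mul_zero]

theorem XstarCM_momentMap_zero (hm : 1 ≤ m) (hq0 : ∀ i, q i ≠ 0)
    (hqm : ∀ i j, i ≠ j → q i ^ m ≠ q j ^ m) :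
    diagonal q * XstarCM m lam q p 0 - XstarCM m lam q p (m - 1) * diagonal q
        - VstarCM n (∑ r ∈ range m, lam r) * VrowCM n
      = lam 0 • (1 : Matrix (Fin n) (Fin n) ℂ) := by
  ext i j
  rw [Matrix.sub_apply, diagonal_mul_sub_mul_diagonal_apply, VstarCM_mul_VrowCM_apply,
    Matrix.smul_apply, smul_eq_mul]
  rcases eq_or_ne i j with rfl | hij
  · have hsplit : ∑ r ∈ range m, lam r = lam 0 + ∑ r ∈ Icc 1 (m - 1), lam r := by
      rw [sum_range_eq_add_Ico _ (by omega), ← Nat.sub_add_cancel hm, Ico_add_one_right_eq_Icc,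
        Nat.add_sub_cancel]
    rw [XstarCM_diag_commutator (hq0 i), hsplit, one_apply_eq,
      Icc_eq_empty_of_lt zero_lt_one, sum_empty]
    ring
  · rw [XstarCM_zero_commutator_of_ne hm hij (hqm i j hij), one_apply_ne hij]
    ring

end XstarCM

theorem rationalCM_slice_momentMap_equations_general
    (m n : ℕ) (hm : 1 ≤ m)
    (lam : ℕ → ℂ) (q p : Fin n → ℂ)
    (hq0 : ∀ i, q i ≠ 0)
    (hqm : ∀ i j, i ≠ j → q i ^ m ≠ q j ^ m) :
    ∀ s, s < m →
      Matrix.diagonal q * XstarCM m lam q p s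
          - XstarCM m lam q p ((s + m - 1) % m) * Matrix.diagonal q
          - (if s = 0 then
              VstarCM n (∑ r ∈ Finset.range m, lam r) * VrowCM n
            else 0)
        = lam s • (1 : Matrix (Fin n) (Fin n) ℂ) := by
  rintro (_ | t) hs
  · rw [if_pos rfl, zero_add, Nat.mod_eq_of_lt (by omega)]
    exact XstarCM_momentMap_zero hm hq0 hqm
  · rw [if_neg t.succ_ne_zero, sub_zero, show t + 1 + m - 1 = t + m by omega, Nat.add_mod_right,
      Nat.mod_eq_of_lt (by omega)]
    exact XstarCM_momentMap_succ hs hq0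

/-- The local slice `X_s = diag(q₁,…,q_n)`, `X*_s` as above,
`V = (1,…,1)`, `V* = −ℓ(1,…,1)ᵀ` satisfies the moment map equations
`X_s X*_s − X*_{s−1} X_{s−1} − δ_{s,0} V* V = λ_s Id_n` for all `s ∈ {0,…,m−1}`,
where `s − 1` is read modulo `m`. -/
theorem rationalCM_slice_momentMap_equations
    (m n : ℕ) (hm : 1 ≤ m) (hn : 1 ≤ n)
    (lam : ℕ → ℂ) (q p : Fin n → ℂ)
    (hq0 : ∀ i, q i ≠ 0)
    (hqm : ∀ i j, i ≠ j → q i ^ m ≠ q j ^ m) :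
    ∀ s, s < m →
      Matrix.diagonal q * XstarCM m lam q p s
          - XstarCM m lam q p ((s + m - 1) % m) * Matrix.diagonal q
          - (if s = 0 then
              VstarCM n (∑ r ∈ Finset.range m, lam r) * VrowCM n
            else 0)
        = lam s • (1 : Matrix (Fin n) (Fin n) ℂ) :=
  rationalCM_slice_momentMap_equations_general m n hm lam q p hq0 hqm
end
end

section
/- Let n ≥ 1 and ℓ ∈ ℂ with ℓ ≠ 0. Let q₁, …, q_n ∈ ℂ satisfy q_i − q_j ∉ {0, ℓ, −ℓ} for all i ≠ j, and let ω₁, …, ω_n ∈ ℂ be nonzero. Define the n×n complex matrix Z̃ with entries Z̃_{ij} := −ℓ·ω_i/(q_i − q_j − ℓ) · ∏_{k≠j} (q_k − q_j − ℓ)/(q_k − q_j), the n×1 matrix W := (1,…,1)ᵀ, and the 1×n matrix W̃ with entries W̃_j := ℓ·∏_{k≠j} (q_k − q_j − ℓ)/(q_k − q_j). Then: (i) Z̃·W is the column vector (ω₁,…,ω_n)ᵀ, i.e. Σ_j Z̃_{ij} = ω_i for every i; (ii) diag(q₁,…,q_n)·Z̃ = Z̃·(diag(q₁,…,q_n) +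 ℓ·Id_n − W·W̃); (iii) Z̃ is invertible, so that Z̃⁻¹·diag(q₁,…,q_n)·Z̃ = diag(q₁,…,q_n) + ℓ·Id_n − W·W̃. -/
open scoped BigOperators

noncomputable section

/-- The gauge-fixed matrix `Z̃` with entries
`Z̃_{ij} = −ℓ·ω_i/(q_i − q_j − ℓ) · ∏_{k≠j} (q_k − q_j − ℓ)/(q_k − q_j)`. -/
def ZtilRS {n : ℕ} (ℓ : ℂ) (q ω : Fin n → ℂ) : Matrix (Fin n) (Fin n) ℂ :=
  Matrix.of fun i j =>
    -ℓ * ω i / (q i - q j - ℓ) *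
      ∏ r ∈ Finset.univ.erase j, (q r - q j - ℓ) / (q r - q j)

/-- The column vector `W = (1,…,1)ᵀ`. -/
def WcolRS (n : ℕ) : Matrix (Fin n) (Fin 1) ℂ := Matrix.of fun _ _ => 1

/-- The row vector `W̃` with entries `W̃_j = ℓ·∏_{k≠j} (q_k − q_j − ℓ)/(q_k − q_j)`. -/
def WtilRS {n : ℕ} (ℓ : ℂ) (q : Fin n → ℂ) : Matrix (Fin 1) (Fin n) ℂ :=
  Matrix.of fun _ j => ℓ * ∏ r ∈ Finset.univ.erase j, (q r - q j - ℓ) / (q r - q j)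


/-!
Let `f_j = ∏_{k≠j} (q_k − q_j − ℓ)/(q_k − q_j)` and let `w_j = ∏_{k≠j} (q_j − q_k)⁻¹` be the
barycentric weights of the nodes `q`. Then `Z̃ = diag(−ℓω) · C · diag(f)` with the Cauchy matrix
`C_{ij} = 1/(q_i − (q_j + ℓ))`, and `ℓ f_j = w_j · ∏_k (q_j − q_k + ℓ)`. Hence the row sums of `Z̃`
are the barycentric (partial fraction) formula for `N(X) = ∏_k (X − q_k + ℓ) − ∏_k (X − q_k)`,
which has degree `< n`, at `X = q_i − ℓ`, where the first product vanishes. The Cauchy matrix is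
invertible because a kernel vector `c` makes the interpolant of `c_j / w_j` at the nodes `q_j + ℓ`
vanish at the `n` distinct points `q_i`. Identity (ii) is entrywise a consequence of (i).
-/

open Finset Polynomial Lagrange Matrix

section Interpolation

variable {F ι : Type*} [Field F] [DecidableEq ι] {v : ι → F}

theorem Lagrange.eval_eq_eval_nodal_mul_sum {s : Finset ι} {f : F[X]} {x : F}
    (hvs : Set.InjOn v s) (hf : f.degree < #s) (hx : ∀ i ∈ s, x ≠ v i) :
    f.eval x = (nodal s v).eval x * ∑ i ∈ s, nodalWeight s v i * (x - v i)⁻¹ * f.eval (v i) := by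
  conv_lhs => rw [eq_interpolate hvs hf]
  exact eval_interpolate_not_at_node _ hx

variable [Fintype ι]

theorem Lagrange.mul_prod_erase_div_eq_nodalWeight_mul_eval_nodal (ℓ : F) (j : ι) :
    ℓ * ∏ r ∈ univ.erase j, (v r - v j - ℓ) / (v r - v j) =
      nodalWeight univ v j * (nodal univ fun k => v k - ℓ).eval (v j) := by
  rw [nodalWeight, eval_nodal, ← mul_prod_erase univ _ (mem_univ j), sub_sub_cancel,
    mul_left_comm, ← prod_mul_distrib]
  congr 1
  refine prod_congr rfl fun r _ => ?_
  rw [← neg_div_neg_eq, div_eq_inv_mul]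
  ring

theorem Lagrange.sum_nodalWeight_mul_inv_sub_mul_eval_nodal_sub (hv : Function.Injective v) {ℓ : F}
    {i : ι} (hx : ∀ j, v i - ℓ ≠ v j) :
    ∑ j, nodalWeight univ v j * (v i - ℓ - v j)⁻¹ * (nodal univ fun k => v k - ℓ).eval (v j)
      = -1 := by
  set M : F[X] := nodal univ fun k => v k - ℓ
  have hdeg : (M - nodal univ v).degree < #(univ : Finset ι) := by
    have := degree_sub_lt_left (p := M) (q := nodal univ v) (by rw [degree_nodal, degree_nodal])
      nodal_ne_zero (by rw [nodal_monic.leadingCoeff, nodal_monic.leadingCoeff])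
    rwa [degree_nodal] at this
  have hMx : M.eval (v i - ℓ) = 0 := eval_nodal_at_node (v := fun k => v k - ℓ) (mem_univ i)
  have hQx : (nodal univ v).eval (v i - ℓ) ≠ 0 := eval_nodal_not_at_node fun j _ => hx j
  have key := eval_eq_eval_nodal_mul_sum hv.injOn hdeg fun j _ => hx j
  simp only [eval_sub, hMx, eval_nodal_at_node (mem_univ _), sub_zero] at key
  apply mul_left_cancel₀ hQx
  rw [← key]
  ring

theorem Matrix.isUnit_cauchy {x y : ι → F} (hx : Function.Injective x)
    (hy : Function.Injective y) (hxy : ∀ i j, x i ≠ y j) :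
    IsUnit (Matrix.of fun i j => (x i - y j)⁻¹) := by
  rw [isUnit_iff_isUnit_det, isUnit_iff_ne_zero, Ne, ← exists_mulVec_eq_zero_iff]
  rintro ⟨c, hc0, hc⟩
  set r : ι → F := fun j => c j / nodalWeight univ y j
  have hP : interpolate univ y r = 0 := by
    refine eq_zero_of_degree_lt_of_eval_index_eq_zero _ hx.injOn
      (degree_interpolate_lt _ hy.injOn) fun i _ => ?_
    rw [eval_interpolate_not_at_node _ fun j _ => hxy i j]
    convert mul_zero _ using 2
    refine Eq.trans ?_ (congrFun hc i)
    refine sum_congr rfl fun j _ => ?_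
    simp only [r, of_apply]
    rw [mul_right_comm, mul_div_cancel₀ _ (nodalWeight_ne_zero hy.injOn (mem_univ j)), mul_comm]
  refine hc0 (funext fun j => ?_)
  have := eval_interpolate_at_node r hy.injOn (mem_univ j)
  rwa [hP, eval_zero, eq_comm, div_eq_zero_iff,
    or_iff_left (nodalWeight_ne_zero hy.injOn (mem_univ j))] at this

end Interpolation

section RuijsenaarsSchneider

variable {n : ℕ} {ℓ : ℂ} {q : Fin n → ℂ}

theorem ZtilRS_eq_diagonal_mul_mul_diagonal (ℓ : ℂ) (q ω : Fin n → ℂ) :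
    ZtilRS ℓ q ω = diagonal (fun i => -ℓ * ω i) * Matrix.of (fun i j => (q i - (q j + ℓ))⁻¹) *
      diagonal (fun j => ∏ r ∈ univ.erase j, (q r - q j - ℓ) / (q r - q j)) := by
  ext i j
  simp only [ZtilRS, diagonal_mul, mul_diagonal, of_apply]
  ring

theorem sum_ZtilRS_apply (hinj : Function.Injective q) (hshift : ∀ i j, q i - q j ≠ ℓ)
    (ω : Fin n → ℂ) (i : Fin n) : ∑ j, ZtilRS ℓ q ω i j = ω i := by
  calc ∑ j, ZtilRS ℓ q ω i j
      = -ω i * ∑ j, nodalWeight univ q j * (q i - ℓ - q j)⁻¹ *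
          (nodal univ fun k => q k - ℓ).eval (q j) := by
        rw [mul_sum]
        refine sum_congr rfl fun j _ => ?_
        rw [mul_right_comm (nodalWeight _ _ _), ← mul_prod_erase_div_eq_nodalWeight_mul_eval_nodal,
          ZtilRS, of_apply, sub_right_comm]
        ring
    _ = ω i := by
        rw [sum_nodalWeight_mul_inv_sub_mul_eval_nodal_sub hinj fun j h =>
          hshift i j (by linear_combination h)]
        ring

theorem ZtilRS_mul_WcolRS (hinj : Function.Injective q) (hshift : ∀ i j, q i - q j ≠ ℓ)
    (ω : Fin n → ℂ) : ZtilRS ℓ q ω * WcolRS n = Matrix.of fun i _ => ω i := by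
  ext i _
  simpa [mul_apply, WcolRS] using sum_ZtilRS_apply hinj hshift ω i

theorem diagonal_mul_ZtilRS (hinj : Function.Injective q) (hshift : ∀ i j, q i - q j ≠ ℓ)
    (ω : Fin n → ℂ) :
    diagonal q * ZtilRS ℓ q ω =
      ZtilRS ℓ q ω * (diagonal q + ℓ • (1 : Matrix (Fin n) (Fin n) ℂ) - WcolRS n * WtilRS ℓ q) := by
  rw [Matrix.mul_sub, Matrix.mul_add, Matrix.mul_smul, Matrix.mul_one, ← Matrix.mul_assoc,
    ZtilRS_mul_WcolRS hinj hshift]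
  ext i j
  have hij : q i - q j - ℓ ≠ 0 := sub_ne_zero.2 (hshift i j)
  rw [Matrix.sub_apply, Matrix.add_apply, Matrix.smul_apply, diagonal_mul, mul_diagonal,
    smul_eq_mul, mul_apply, Fin.sum_univ_one]
  simp only [ZtilRS, WtilRS, of_apply]
  field_simp
  ring

theorem isUnit_ZtilRS (hℓ : ℓ ≠ 0) (hinj : Function.Injective q) (hshift : ∀ i j, q i - q j ≠ ℓ)
    {ω : Fin n → ℂ} (hω : ∀ i, ω i ≠ 0) : IsUnit (ZtilRS ℓ q ω) := by
  rw [ZtilRS_eq_diagonal_mul_mul_diagonal]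
  refine ((isUnit_diagonal.2 ?_).mul (isUnit_cauchy hinj (add_left_injective ℓ |>.comp hinj)
    fun i j => ?_)).mul (isUnit_diagonal.2 ?_)
  · exact Pi.isUnit_iff.2 fun i => (mul_ne_zero (neg_ne_zero.2 hℓ) (hω i)).isUnit
  · exact fun h => hshift i j (by simp [h])
  · refine Pi.isUnit_iff.2 fun j => (prod_ne_zero_iff.2 fun r hr => ?_).isUnit
    exact div_ne_zero (sub_ne_zero.2 (hshift r j))
      (sub_ne_zero.2 (hinj.ne (ne_of_mem_erase hr)))

end RuijsenaarsSchneider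

theorem rationalRS_slice_identities_general
    (n : ℕ) (ℓ : ℂ) (hℓ : ℓ ≠ 0)
    (q ω : Fin n → ℂ)
    (hq : ∀ i j : Fin n, i ≠ j →
      q i - q j ≠ 0 ∧ q i - q j ≠ ℓ ∧ q i - q j ≠ -ℓ)
    (hω : ∀ i, ω i ≠ 0) :
    (∀ i, ∑ j, ZtilRS ℓ q ω i j = ω i) ∧
    (ZtilRS ℓ q ω * WcolRS n = Matrix.of fun i _ => ω i) ∧
    (Matrix.diagonal q * ZtilRS ℓ q ω
      = ZtilRS ℓ q ω *
        (Matrix.diagonal q + ℓ • (1 : Matrix (Fin n) (Fin n) ℂ)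
          - WcolRS n * WtilRS ℓ q)) ∧
    IsUnit (ZtilRS ℓ q ω) ∧
    (ZtilRS ℓ q ω)⁻¹ * Matrix.diagonal q * ZtilRS ℓ q ω
      = Matrix.diagonal q + ℓ • (1 : Matrix (Fin n) (Fin n) ℂ)
        - WcolRS n * WtilRS ℓ q := by
  have hinj : Function.Injective q := fun i j h => by
    by_contra hij
    exact (hq i j hij).1 (sub_eq_zero.2 h)
  have hshift : ∀ i j, q i - q j ≠ ℓ := fun i j => by
    rcases eq_or_ne i j with rfl | hij
    · simpa [eq_comm] using hℓ
    · exact (hq i j hij).2.1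
  have hdisp := diagonal_mul_ZtilRS hinj hshift ω
  have hunit := isUnit_ZtilRS hℓ hinj hshift hω
  refine ⟨sum_ZtilRS_apply hinj hshift ω, ZtilRS_mul_WcolRS hinj hshift ω, hdisp, hunit, ?_⟩
  rw [Matrix.mul_assoc, hdisp, ← Matrix.mul_assoc,
    nonsing_inv_mul _ ((isUnit_iff_isUnit_det _).1 hunit), Matrix.one_mul]

/-- For ℓ ≠ 0, q with q_i − q_j ∉ {0, ℓ, −ℓ} for i ≠ j, and nonzero ω:
(i) the row sums of Z̃ are the ω_i, i.e. Z̃·W = (ω₁,…,ω_n)ᵀ;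
(ii) diag(q)·Z̃ = Z̃·(diag(q) + ℓ·Id − W·W̃);
(iii) Z̃ is invertible, so Z̃⁻¹·diag(q)·Z̃ = diag(q) + ℓ·Id − W·W̃. -/
theorem rationalRS_slice_identities
    (n : ℕ) (hn : 1 ≤ n) (ℓ : ℂ) (hℓ : ℓ ≠ 0)
    (q ω : Fin n → ℂ)
    (hq : ∀ i j : Fin n, i ≠ j →
      q i - q j ≠ 0 ∧ q i - q j ≠ ℓ ∧ q i - q j ≠ -ℓ)
    (hω : ∀ i, ω i ≠ 0) :
    (∀ i, ∑ j, ZtilRS ℓ q ω i j = ω i) ∧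
    (ZtilRS ℓ q ω * WcolRS n = Matrix.of fun i _ => ω i) ∧
    (Matrix.diagonal q * ZtilRS ℓ q ω
      = ZtilRS ℓ q ω *
        (Matrix.diagonal q + ℓ • (1 : Matrix (Fin n) (Fin n) ℂ)
          - WcolRS n * WtilRS ℓ q)) ∧
    IsUnit (ZtilRS ℓ q ω) ∧
    (ZtilRS ℓ q ω)⁻¹ * Matrix.diagonal q * ZtilRS ℓ q ω
      = Matrix.diagonal q + ℓ • (1 : Matrix (Fin n) (Fin n) ℂ)
        - WcolRS n * WtilRS ℓ q :=
  rationalRS_slice_identities_general n ℓ hℓ q ω hq hω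
end
end
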